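/- arXiv:1612.01379 — 2 statements merged into one kernel-verified Lean document; each statement's English description precedes it below -/
import Mathlib

section
/- Let f : ℝ^d → ℝ^d be a polynomial map with rational coefficients and p ∈ ℝ^d a point with coordinates algebraically independent over ℚ. Suppose the Jacobian df|_p is nonsingular. Then for every q ∈ ℝ^d with f(q) = f(p), the algebraic closure (inside ℝ) of the field ℚ(p) generated by the coordinates of p equals the algebraic closure of ℚ(q). -/
/-!
The Jacobian criterion makes the `P i` algebraically independent over `ℚ`: a nonzero `F` of
minimal degree with `F(P) = 0` would, by the chain rule and the invertibility of the Jacobian,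
have all its partial derivatives vanishing, hence be constant. Evaluating at the generic point,
the values `v = P(p) = P(q)` are `d` algebraically independent reals lying in both `ℚ[p]` and
`ℚ[q]`. A ring generated by `d` elements has transcendence degree at most `d`, so every coordinate
of `p` and of `q` is algebraic over `ℚ(v)`; hence `ℚ(p)` and `ℚ(q)` are algebraic over `ℚ(v)` and
share its relative algebraic closure.
-/

open MvPolynomial Set

namespace MvPolynomial

section CommSemiring

variable {R σ τ : Type*} [CommSemiring R]

theorem pderiv_bind₁ [Fintype σ] (P : σ → MvPolynomial τ R) (j : τ) (F : MvPolynomial σ R) :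
    pderiv j (bind₁ P F) = ∑ i, bind₁ P (pderiv i F) * pderiv j (P i) := by
  classical
  induction F using MvPolynomial.induction_on with
  | C a => simp
  | add f g hf hg => simp [hf, hg, add_mul, Finset.sum_add_distrib]
  | mul_X f k hf =>
    simp [hf, pderiv_X, Pi.single_apply, add_mul, Finset.sum_add_distrib, apply_ite (bind₁ P),
      Finset.mul_sum, mul_assoc]

theorem totalDegree_pderiv_lt {F : MvPolynomial σ R} {i : σ} (h : pderiv i F ≠ 0) :
    (pderiv i F).totalDegree < F.totalDegree := by
  obtain ⟨m, hm, hdeg⟩ :=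
    Finset.exists_mem_eq_sup _ (support_nonempty.2 h) fun s : σ →₀ ℕ => s.sum fun _ e => e
  have hF : m + Finsupp.single i 1 ∈ F.support := by
    rw [mem_support_iff, coeff_pderiv] at hm
    exact mem_support_iff.2 (left_ne_zero_of_mul hm)
  rw [totalDegree, hdeg]
  refine lt_of_lt_of_le ?_ (le_totalDegree hF)
  simp [Finsupp.sum_add_index']

theorem eq_C_of_pderiv_eq_zero [CharZero R] [NoZeroDivisors R] {F : MvPolynomial σ R}
    (h : ∀ i, pderiv i F = 0) : F = C (coeff 0 F) := by
  classical
  ext m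
  rw [coeff_C]
  split_ifs with hm
  · rw [hm]
  obtain ⟨i, hi⟩ : ∃ i, m i ≠ 0 := by
    by_contra! H; exact hm (Finsupp.ext H).symm
  have hsplit : m = (m - Finsupp.single i 1) + Finsupp.single i 1 :=
    (tsub_add_cancel_of_le (Finsupp.single_le_iff.2 (Nat.one_le_iff_ne_zero.2 hi))).symm
  have := coeff_pderiv (i := i) F (m - Finsupp.single i 1)
  rw [h i, coeff_zero, ← hsplit, eq_comm, mul_eq_zero] at this
  exact this.resolve_right (Nat.cast_add_one_ne_zero _)

noncomputable def jacobianMatrix (P : σ → MvPolynomial σ R) : Matrix σ σ (MvPolynomial σ R) :=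
  Matrix.of fun i j => pderiv j (P i)

end CommSemiring

variable {R σ ι : Type*} [CommRing R] [IsDomain R]

theorem algebraicIndependent_of_det_jacobianMatrix_ne_zero [CharZero R] [Fintype σ]
    [DecidableEq σ] {P : σ → MvPolynomial σ R} (hP : (jacobianMatrix P).det ≠ 0) :
    AlgebraicIndependent R P := by
  show Function.Injective (bind₁ P)
  rw [injective_iff_map_eq_zero]
  intro F hF
  induction hn : F.totalDegree using Nat.strong_induction_on generalizing F with
  | _ n ih =>
  have hvecMul : Matrix.vecMul (fun i => bind₁ P (pderiv i F)) (jacobianMatrix P) = 0 := by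
    funext j
    simpa [Matrix.vecMul, dotProduct, jacobianMatrix, hF] using (pderiv_bind₁ P j F).symm
  have hpderiv (i : σ) : pderiv i F = 0 := by
    by_contra hi
    exact hi (ih _ (hn ▸ totalDegree_pderiv_lt hi) _
      (congrFun (Matrix.eq_zero_of_vecMul_eq_zero hP hvecMul) i) rfl)
  rw [eq_C_of_pderiv_eq_zero hpderiv, bind₁_C_right, C_eq_zero] at hF
  rw [eq_C_of_pderiv_eq_zero hpderiv, hF, C_0]

theorem not_algebraicIndependent_option [Finite ι] (Q : Option ι → MvPolynomial ι R) :
    ¬ AlgebraicIndependent R Q := by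
  have := Fintype.ofFinite ι
  intro hQ
  -- `#(Option ι) ≤ trdeg R (MvPolynomial ι R) = #ι` is impossible for finite `ι`.
  simpa using hQ.lift_cardinalMk_le_trdeg

end MvPolynomial

theorem AlgebraicIndependent.isAlgebraic_adjoin_of_mem_adjoin {R A ι : Type*} [CommRing R]
    [IsDomain R] [CommRing A] [Algebra R A] [Finite ι] {x y : ι → A} (hy : AlgebraicIndependent R y)
    (hyx : ∀ j, y j ∈ Algebra.adjoin R (range x)) (i : ι) :
    IsAlgebraic (Algebra.adjoin R (range y)) (x i) := by
  by_contra h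
  have hind := (hy.option_iff_transcendental (x i)).2 h
  simp_rw [Algebra.adjoin_range_eq_range_aeval, AlgHom.mem_range] at hyx
  choose Q hQ using hyx
  apply not_algebraicIndependent_option (fun o => o.elim (X i) Q)
  refine AlgebraicIndependent.of_comp (aeval x) ?_
  convert hind using 1
  ext (_ | j) <;> simp [hQ]

namespace IntermediateField

theorem setOf_isAlgebraic_adjoin_eq {F E : Type*} [Field F] [Field E] [Algebra F E]
    {s t : Set E} (hst : s ⊆ adjoin F t) (hts : ∀ x ∈ t, IsAlgebraic (adjoin F s) x) :
    {x : E | IsAlgebraic (adjoin F t) x} = {x : E | IsAlgebraic (adjoin F s) x} := by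
  set K := adjoin F s
  ext x
  constructor
  · intro hx
    let M := adjoin K t
    have : Algebra.IsAlgebraic K M := (isAlgebraic_adjoin_iff_isAlgebraic K E).2 hts
    have hle : adjoin F t ≤ M.restrictScalars F := adjoin_le_iff.2 (subset_adjoin K t)
    have hxM : IsAlgebraic M x := hx.tower_top_of_subalgebra_le hle
    exact hxM.restrictScalars K
  · exact fun hx => hx.tower_top_of_subalgebra_le (adjoin_le_iff.2 hst)

end IntermediateField

/-- If `f : ℝ^d → ℝ^d` is a polynomial map with rational coefficients,
`p` is generic, and the Jacobian of `f` at `p` is nonsingular, then for every `q` with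
`f(q) = f(p)` the relative algebraic closure of `ℚ(p)` in `ℝ` equals that of `ℚ(q)`. -/
theorem algebraic_closure_eq_of_same_image
    {d : ℕ} (P : Fin d → MvPolynomial (Fin d) ℚ)
    (p : Fin d → ℝ) (hp : AlgebraicIndependent ℚ p)
    (hJ : (Matrix.of fun (i : Fin d) (j : Fin d) =>
        MvPolynomial.aeval p (MvPolynomial.pderiv j (P i))).det ≠ 0)
    (q : Fin d → ℝ)
    (hq : ∀ i, MvPolynomial.aeval q (P i) = MvPolynomial.aeval p (P i)) :
    {x : ℝ | IsAlgebraic (IntermediateField.adjoin ℚ (Set.range p)) x} =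
    {x : ℝ | IsAlgebraic (IntermediateField.adjoin ℚ (Set.range q)) x} := by
  have hdet : (jacobianMatrix P).det ≠ 0 :=
    ne_zero_of_map (f := aeval p) (by rwa [AlgHom.map_det])
  set v := fun j => aeval p (P j)
  have hv : AlgebraicIndependent ℚ v :=
    (algebraicIndependent_of_det_jacobianMatrix_ne_zero hdet).map' hp
  have hclosure (r : Fin d → ℝ) (hr : ∀ j, aeval r (P j) = v j) :
      {x : ℝ | IsAlgebraic (IntermediateField.adjoin ℚ (range r)) x} =
        {x : ℝ | IsAlgebraic (IntermediateField.adjoin ℚ (range v)) x} := by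
    have hvr (j : Fin d) : v j ∈ Algebra.adjoin ℚ (range r) :=
      hr j ▸ Algebra.adjoin_range_eq_range_aeval ℚ r ▸ ⟨P j, rfl⟩
    refine IntermediateField.setOf_isAlgebraic_adjoin_eq (range_subset_iff.2 fun j =>
      IntermediateField.algebra_adjoin_le_adjoin ℚ _ (hvr j)) (forall_mem_range.2 fun i => ?_)
    exact (hv.isAlgebraic_adjoin_of_mem_adjoin hvr i).tower_top_of_subalgebra_le
      (IntermediateField.algebra_adjoin_le_adjoin ℚ _)
  rw [hclosure p fun _ => rfl, hclosure q hq]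
end

section
/- Let (G, ψ) be a Γ-labeled graph and let v be a vertex of degree two in G with |V(G)| ≥ 2. Then in the periodic rigidity count matroid, r₂(G − v) = r₂(G) − 2, where r₂ denotes the rank function of the matroid on edge sets E given by independence: E is independent iff |F| ≤ 2|V(F)| − 3 for every nonempty balanced F ⊆ E and |F| ≤ 2|V(F)| − 2 for every nonempty F ⊆ E. -/
open Finset

/-- The set of vertices incident to an edge set `F`. -/
def labVerts {V ε : Type*} [DecidableEq V] [DecidableEq ε]
    (head tail : ε → V) (F : Finset ε) : Finset V :=
  F.image head ∪ F.image tail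

/-- An edge set `F` of a `Γ`-labeled graph is balanced if the label of every closed walk
in `F` is the identity; equivalently, the labels on `F` come from a potential `θ`. -/
def IsBalanced {V ε Γ : Type*} [AddCommGroup Γ]
    (head tail : ε → V) (ψ : ε → Γ) (F : Finset ε) : Prop :=
  ∃ θ : V → Γ, ∀ e ∈ F, ψ e = θ (head e) - θ (tail e)

/-- Independence in the periodic count matroid `R₂(V,Γ)`:
every nonempty subset `F'` satisfies `|F'| ≤ 2|V(F')| − 2`, and every nonempty balanced
subset `F'` satisfies `|F'| ≤ 2|V(F')| − 3`. -/
def CountIndep {V ε Γ : Type*} [DecidableEq V] [DecidableEq ε] [AddCommGroup Γ]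
    (head tail : ε → V) (ψ : ε → Γ) (F : Finset ε) : Prop :=
  (∀ F' ⊆ F, F'.Nonempty → F'.card ≤ 2 * (labVerts head tail F').card - 2) ∧
  (∀ F' ⊆ F, F'.Nonempty → IsBalanced head tail ψ F' →
    F'.card ≤ 2 * (labVerts head tail F').card - 3)

/-- The rank function `r₂` of the periodic count matroid: the maximum cardinality of an
independent subset of `E`. -/
noncomputable def rank2 {V ε Γ : Type*} [DecidableEq V] [DecidableEq ε] [AddCommGroup Γ]
    (head tail : ε → V) (ψ : ε → Γ) (E : Finset ε) : ℕ := by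
  classical
  exact (E.powerset.filter (CountIndep head tail ψ)).sup Finset.card

section Aux
variable {V ε Γ : Type*} [DecidableEq V] [DecidableEq ε] [AddCommGroup Γ]
variable {head tail : ε → V} {ψ : ε → Γ}

lemma mem_labVerts {F : Finset ε} {x : V} :
    x ∈ labVerts head tail F ↔ ∃ e ∈ F, head e = x ∨ tail e = x := by
  simp only [labVerts, mem_union, Finset.mem_image]
  constructor
  · rintro (⟨e, he, h⟩ | ⟨e, he, h⟩)
    exacts [⟨e, he, Or.inl h⟩, ⟨e, he, Or.inr h⟩]
  · rintro ⟨e, he, h | h⟩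
    exacts [Or.inl ⟨e, he, h⟩, Or.inr ⟨e, he, h⟩]

lemma labVerts_mono {F F' : Finset ε} (h : F ⊆ F') :
    labVerts head tail F ⊆ labVerts head tail F' :=
  union_subset_union (image_subset_image h) (image_subset_image h)

lemma countIndep_mono {F F' : Finset ε} (h : CountIndep head tail ψ F) (hsub : F' ⊆ F) :
    CountIndep head tail ψ F' :=
  ⟨fun G hG => h.1 G (hG.trans hsub), fun G hG => h.2 G (hG.trans hsub)⟩

lemma countIndep_empty : CountIndep head tail ψ (∅ : Finset ε) := by
  constructor <;> intro F' hF' hne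
  · rw [Finset.subset_empty.mp hF'] at hne; simp at hne
  · rw [Finset.subset_empty.mp hF'] at hne; simp at hne

lemma rank2_eq [DecidablePred (CountIndep head tail ψ)] (E : Finset ε) :
    rank2 head tail ψ E = (E.powerset.filter (CountIndep head tail ψ)).sup Finset.card := by
  unfold rank2
  congr 1
  exact Finset.filter_congr_decidable _ _ _

lemma le_rank2 {I E : Finset ε} (hIE : I ⊆ E) (hI : CountIndep head tail ψ I) :
    I.card ≤ rank2 head tail ψ E := by
  classical
  rw [rank2_eq]
  exact Finset.le_sup (by simp [Finset.mem_filter, Finset.mem_powerset, hIE, hI])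

lemma rank2_exists (E : Finset ε) :
    ∃ I, I ⊆ E ∧ CountIndep head tail ψ I ∧ I.card = rank2 head tail ψ E := by
  classical
  rw [rank2_eq]
  have hne : (E.powerset.filter (CountIndep head tail ψ)).Nonempty :=
    ⟨∅, by simp [Finset.mem_filter, countIndep_empty]⟩
  obtain ⟨I, hI, hEq⟩ := Finset.exists_mem_eq_sup _ hne Finset.card
  simp only [Finset.mem_filter, Finset.mem_powerset] at hI
  exact ⟨I, hI.1, hI.2, hEq.symm⟩

lemma two_le_labVerts_card (hloop : ∀ e : ε, head e ≠ tail e) {F : Finset ε}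
    (hF : F.Nonempty) : 2 ≤ (labVerts head tail F).card := by
  obtain ⟨e, he⟩ := hF
  have h1 : ({head e, tail e} : Finset V) ⊆ labVerts head tail F := by
    intro x hx
    simp only [Finset.mem_insert, Finset.mem_singleton] at hx
    rcases hx with h | h <;> exact mem_labVerts.mpr ⟨e, he, by tauto⟩
  calc 2 = ({head e, tail e} : Finset V).card := (Finset.card_pair (hloop e)).symm
    _ ≤ _ := Finset.card_le_card h1

end Aux

section Ext
variable {V ε Γ : Type*} [DecidableEq V] [DecidableEq ε] [AddCommGroup Γ]
variable {head tail : ε → V} {ψ : ε → Γ}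

set_option maxHeartbeats 1000000 in
lemma countIndep_extend {v : V} {e1 e2 : ε}
    (hloop : ∀ e : ε, head e ≠ tail e)
    (h12 : e1 ≠ e2)
    (h1 : head e1 = v ∨ tail e1 = v) (h2 : head e2 = v ∨ tail e2 = v)
    (hs : ¬ ((head e2 = head e1 ∧ tail e2 = tail e1 ∧ ψ e2 = ψ e1) ∨
         (head e2 = tail e1 ∧ tail e2 = head e1 ∧ ψ e2 = - ψ e1)))
    {I : Finset ε} (hIv : ∀ e ∈ I, head e ≠ v ∧ tail e ≠ v)
    (hI : CountIndep head tail ψ I) :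
    CountIndep head tail ψ (I ∪ {e1, e2}) := by
  have main : ∀ F' ⊆ I ∪ ({e1, e2} : Finset ε), F'.Nonempty →
      F'.card ≤ 2 * (labVerts head tail F').card - 2 ∧
      (IsBalanced head tail ψ F' → F'.card ≤ 2 * (labVerts head tail F').card - 3) := by
    intro F' hF' hne
    by_cases hsubI : F' ⊆ I
    · exact ⟨hI.1 F' hsubI hne, fun hb => hI.2 F' hsubI hne hb⟩
    · set F'' := F' \ {e1, e2} with hF''def
      have hF''I : F'' ⊆ I := by
        intro e he
        rw [hF''def, Finset.mem_sdiff] at he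
        rcases Finset.mem_union.mp (hF' he.1) with h | h
        · exact h
        · exact absurd h he.2
      have hvF' : v ∈ labVerts head tail F' := by
        obtain ⟨e, heF', heI⟩ := Finset.not_subset.mp hsubI
        have he12 : e = e1 ∨ e = e2 := by
          rcases Finset.mem_union.mp (hF' heF') with h | h
          · exact absurd h heI
          · simpa using h
        rcases he12 with rfl | rfl
        · exact mem_labVerts.mpr ⟨e, heF', by tauto⟩
        · exact mem_labVerts.mpr ⟨e, heF', by tauto⟩
      have hvF'' : v ∉ labVerts head tail F'' := by
        intro hv
        obtain ⟨e, he, hor⟩ := mem_labVerts.mp hv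
        obtain ⟨hh, ht⟩ := hIv e (hF''I he)
        tauto
      have hVle : (labVerts head tail F'').card + 1 ≤ (labVerts head tail F').card := by
        have hsub : insert v (labVerts head tail F'') ⊆ labVerts head tail F' := by
          refine Finset.insert_subset hvF' (labVerts_mono ?_)
          rw [hF''def]; exact Finset.sdiff_subset
        calc (labVerts head tail F'').card + 1
            = (insert v (labVerts head tail F'')).card :=
              (Finset.card_insert_of_notMem hvF'').symm
          _ ≤ _ := Finset.card_le_card hsub
      have hcardle : F'.card ≤ F''.card + 2 := by
        have hsub : F' ⊆ F'' ∪ {e1, e2} := by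
          intro e he
          by_cases h : e ∈ ({e1, e2} : Finset ε)
          · exact Finset.mem_union_right _ h
          · exact Finset.mem_union_left _ (Finset.mem_sdiff.mpr ⟨he, h⟩)
        calc F'.card ≤ (F'' ∪ {e1, e2}).card := Finset.card_le_card hsub
          _ ≤ F''.card + ({e1, e2} : Finset ε).card := Finset.card_union_le _ _
          _ = F''.card + 2 := by rw [Finset.card_pair h12]
      by_cases hF''ne : F''.Nonempty
      · have ha2 : 2 ≤ (labVerts head tail F'').card := two_le_labVerts_card hloop hF''ne
        have hgen : F''.card ≤ 2 * (labVerts head tail F'').card - 2 := hI.1 F'' hF''I hF''ne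
        refine ⟨by omega, fun hb => ?_⟩
        have hb'' : IsBalanced head tail ψ F'' := by
          obtain ⟨θ, hθ⟩ := hb
          exact ⟨θ, fun e he => hθ e (by rw [hF''def] at he; exact Finset.sdiff_subset he)⟩
        have hbal := hI.2 F'' hF''I hF''ne hb''
        omega
      · have hsub2 : F' ⊆ {e1, e2} := by
          intro e he
          by_contra h
          exact hF''ne ⟨e, by rw [hF''def]; exact Finset.mem_sdiff.mpr ⟨he, h⟩⟩
        have hle2 : F'.card ≤ 2 := by
          calc F'.card ≤ ({e1, e2} : Finset ε).card := Finset.card_le_card hsub2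
            _ = 2 := Finset.card_pair h12
        have h2V : 2 ≤ (labVerts head tail F').card := two_le_labVerts_card hloop hne
        refine ⟨by omega, fun hb => ?_⟩
        by_cases hcard1 : F'.card ≤ 1
        · omega
        · have hF'eq : F' = {e1, e2} :=
            Finset.eq_of_subset_of_card_le hsub2 (by rw [Finset.card_pair h12]; omega)
          have h3 : 3 ≤ (labVerts head tail F').card := by
            by_contra h3
            push_neg at h3
            have hsubV : ({head e1, tail e1} : Finset V) ⊆ labVerts head tail F' := by
              intro x hx
              simp only [Finset.mem_insert, Finset.mem_singleton] at hx
              rcases hx with rfl | rfl <;>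
                exact mem_labVerts.mpr ⟨e1, by simp [hF'eq], by tauto⟩
            have heqV : labVerts head tail F' = {head e1, tail e1} :=
              (Finset.eq_of_subset_of_card_le hsubV
                (by rw [Finset.card_pair (hloop e1)]; omega)).symm
            have hh2 : head e2 ∈ ({head e1, tail e1} : Finset V) := by
              rw [← heqV]; exact mem_labVerts.mpr ⟨e2, by simp [hF'eq], Or.inl rfl⟩
            have ht2 : tail e2 ∈ ({head e1, tail e1} : Finset V) := by
              rw [← heqV]; exact mem_labVerts.mpr ⟨e2, by simp [hF'eq], Or.inr rfl⟩
            simp only [Finset.mem_insert, Finset.mem_singleton] at hh2 ht2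
            obtain ⟨θ, hθ⟩ := hb
            have hψ1 : ψ e1 = θ (head e1) - θ (tail e1) := hθ e1 (by simp [hF'eq])
            have hψ2 : ψ e2 = θ (head e2) - θ (tail e2) := hθ e2 (by simp [hF'eq])
            rcases hh2 with hh2 | hh2 <;> rcases ht2 with ht2 | ht2
            · exact hloop e2 (hh2.trans ht2.symm)
            · exact hs (Or.inl ⟨hh2, ht2, by rw [hψ2, hψ1, hh2, ht2]⟩)
            · exact hs (Or.inr ⟨hh2, ht2, by rw [hψ2, hψ1, hh2, ht2]; abel⟩)
            · exact hloop e2 (hh2.trans ht2.symm)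
          omega
  exact ⟨fun F' h hn => (main F' h hn).1, fun F' h hn hb => (main F' h hn).2 hb⟩
end Ext


set_option maxHeartbeats 1000000 in
/-- Lemma lem:0extension. If `v` has degree two in a `Γ`-labeled graph
`G` (semi-simple and loopless) with at least two vertices, then deleting `v` drops the
periodic count-matroid rank by exactly two: `r₂(G − v) = r₂(G) − 2`. -/
theorem rank_delete_degree_two_vertex
    {V ε Γ : Type*} [Fintype V] [Fintype ε] [DecidableEq V] [DecidableEq ε] [AddCommGroup Γ]
    (head tail : ε → V) (ψ : ε → Γ)
    (hloopless : ∀ e : ε, head e ≠ tail e)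
    (hsimple : ∀ e f : ε, e ≠ f →
      ¬ ((head f = head e ∧ tail f = tail e ∧ ψ f = ψ e) ∨
         (head f = tail e ∧ tail f = head e ∧ ψ f = - ψ e)))
    (hV : 2 ≤ Fintype.card V)
    (v : V)
    (hdeg : ((univ.filter fun e : ε => head e = v).card +
             (univ.filter fun e : ε => tail e = v).card) = 2) :
    rank2 head tail ψ (univ.filter fun e : ε => head e ≠ v ∧ tail e ≠ v) =
      rank2 head tail ψ (univ : Finset ε) - 2 := by
  classical
  set E' : Finset ε := univ.filter fun e : ε => head e ≠ v ∧ tail e ≠ v with hE'def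
  set S : Finset ε := univ.filter fun e : ε => head e = v ∨ tail e = v with hSdef
  have hdisj : Disjoint (univ.filter fun e : ε => head e = v)
      (univ.filter fun e : ε => tail e = v) := by
    rw [Finset.disjoint_left]
    intro e he1 he2
    rw [Finset.mem_filter] at he1 he2
    exact hloopless e (he1.2.trans he2.2.symm)
  have hScard : S.card = 2 := by
    rw [hSdef, Finset.filter_or, Finset.card_union_of_disjoint hdisj, hdeg]
  obtain ⟨e1, e2, h12, hSeq⟩ := Finset.card_eq_two.mp hScard
  have he1S : e1 ∈ S := by rw [hSeq]; simp
  have he2S : e2 ∈ S := by rw [hSeq]; simp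
  have h1 : head e1 = v ∨ tail e1 = v := (Finset.mem_filter.mp he1S).2
  have h2 : head e2 = v ∨ tail e2 = v := (Finset.mem_filter.mp he2S).2
  -- direction 1 : rank2 E' + 2 ≤ rank2 univ
  obtain ⟨I, hIE', hInd, hIcard⟩ := rank2_exists (head := head) (tail := tail) (ψ := ψ) E'
  have hIv : ∀ e ∈ I, head e ≠ v ∧ tail e ≠ v := fun e he =>
    (Finset.mem_filter.mp (hIE' he)).2
  have hJind := countIndep_extend hloopless h12 h1 h2 (hsimple e1 e2 h12) hIv hInd
  have hnotmem : ∀ e ∈ ({e1, e2} : Finset ε), e ∉ I := by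
    intro e he hmem
    have := hIv e hmem
    simp only [Finset.mem_insert, Finset.mem_singleton] at he
    rcases he with rfl | rfl
    · tauto
    · tauto
  have hdisj2 : Disjoint I ({e1, e2} : Finset ε) :=
    Finset.disjoint_right.mpr hnotmem
  have hcardJ : (I ∪ ({e1, e2} : Finset ε)).card = I.card + 2 := by
    rw [Finset.card_union_of_disjoint hdisj2, Finset.card_pair h12]
  have hA : rank2 head tail ψ E' + 2 ≤ rank2 head tail ψ (univ : Finset ε) := by
    have h := le_rank2 (Finset.subset_univ (I ∪ ({e1, e2} : Finset ε))) hJind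
    rw [hcardJ, hIcard] at h
    exact h
  -- direction 2 : rank2 univ ≤ rank2 E' + 2
  obtain ⟨J, _, hJind2, hJcard⟩ :=
    rank2_exists (head := head) (tail := tail) (ψ := ψ) (univ : Finset ε)
  have hJ'E' : J \ ({e1, e2} : Finset ε) ⊆ E' := by
    intro e he
    rw [Finset.mem_sdiff] at he
    have heS : e ∉ S := by rw [hSeq]; exact he.2
    rw [hSdef, Finset.mem_filter] at heS
    push_neg at heS
    rw [hE'def, Finset.mem_filter]
    exact ⟨Finset.mem_univ e, heS (Finset.mem_univ e)⟩
  have hB : rank2 head tail ψ (univ : Finset ε) ≤ rank2 head tail ψ E' + 2 := by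
    have h := le_rank2 hJ'E' (countIndep_mono hJind2 Finset.sdiff_subset)
    have hcard : J.card ≤ (J \ ({e1, e2} : Finset ε)).card + 2 := by
      calc J.card ≤ (J \ ({e1, e2} : Finset ε)).card + ({e1, e2} : Finset ε).card :=
            Finset.card_le_card_sdiff_add_card
        _ = _ := by rw [Finset.card_pair h12]
    omega
  omega
end
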